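/- Let n ≥ 7 and let g = g^2_{(n,1)} be the complex Lie algebra with basis e_1,…,e_n and nonzero brackets [e_1,e_i] = e_{i+1} for 2 ≤ i ≤ n−2 and [e_i,e_n] = e_{i+2} for 2 ≤ i ≤ n−3. If φ is a 1/2-derivation of g, then φ(e_i) = α_1 e_i for 4 ≤ i ≤ n−1, where α_1 is the coefficient of e_1 in φ(e_1); moreover the coefficient of e_1 in φ(e_2) and in φ(e_n) is zero. -/

import Mathlib

/-!
Write `a m k` for the coefficient of `e m` in `φ (e k)`. The structure constants of
`g^2_{(n,1)}` being explicit, the 1/2-derivation identity on `⁅e 1, e (k - 1)⁆ = e k` and on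
`⁅e (k - 2), e n⁆ = e k` becomes two linear recursions for `a`, shifting both indices by one and
by two respectively. Two steps of the first and one step of the second both link the entry
`(j + 2, i + 2)` to `(j, i)`, with factors `1/4` and `1/2`; comparing them expresses the middle
block `2 ≤ i, j ≤ n - 3` through the corner entries `a 1 1, a n 1, a 1 n, a n n`. Feeding this back
into the first recursion forces `a n n = a 1 1` and `a n 1 = a 1 n = 0`, so the middle block is
`a 1 1` times the identity, and one more step of the second recursion extends this to the columns
`4 ≤ k ≤ n - 1`. Finally `a 1 2 = 0` is the `e (n - 1)`-coordinate of the identity on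
`⁅e 2, e (n - 2)⁆ = 0`.
-/

open Module

section Coordinates

variable {R L : Type*} [CommRing R] [AddCommGroup L] [Module R L] {n : ℕ}

/-- Coordinates indexed `1, …, n` as in the paper: `natCoord b m` reads off the coefficient of
`b (m - 1)`, and is zero for `m = 0` and `m > n`. -/
noncomputable def natCoord (b : Basis (Fin n) R L) (m : ℕ) : L →ₗ[R] R :=
  if h : 1 ≤ m ∧ m ≤ n then b.coord ⟨m - 1, by omega⟩ else 0

theorem natCoord_succ_apply (b : Basis (Fin n) R L) (i : Fin n) (x : L) :
    natCoord b (i + 1) x = b.repr x i := by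
  rw [natCoord, dif_pos (by omega)]
  rfl

theorem natCoord_basis (b : Basis (Fin n) R L) (m : ℕ) (i : Fin n) :
    natCoord b m (b i) = if m = i + 1 then 1 else 0 := by
  unfold natCoord
  split_ifs <;> simp [Finsupp.single_apply, Fin.ext_iff] <;> omega

theorem natCoord_e {b : Basis (Fin n) R L} {e : ℕ → L}
    (hb : ∀ i : Fin n, e (i.1 + 1) = b i) ⦃k : ℕ⦄ (hk : 1 ≤ k) (hkn : k ≤ n) (m : ℕ) :
    natCoord b m (e k) = if m = k then 1 else 0 := by
  obtain ⟨i, rfl⟩ : ∃ i : Fin n, k = i + 1 := ⟨⟨k - 1, by omega⟩, by simp; omega⟩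
  rw [hb, natCoord_basis]

theorem ext_natCoord (b : Basis (Fin n) R L) {x y : L}
    (h : ∀ m, natCoord b m x = natCoord b m y) : x = y :=
  b.ext_elem fun i => by simpa [natCoord_succ_apply] using h (i + 1)

end Coordinates

section Table

variable {R L : Type*} [CommRing R] [LieRing L] [LieAlgebra R L] {n : ℕ}

def IsG2n1Table (n : ℕ) (e : ℕ → L) : Prop :=
  ∀ i j : ℕ, 1 ≤ i → i < j → j ≤ n →
    ⁅e i, e j⁆ =
      if i = 1 ∧ 2 ≤ j ∧ j ≤ n - 2 then e (j + 1)
      else if j = n ∧ 2 ≤ i ∧ i ≤ n - 3 then e (i + 2)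
      else 0

/-- `g2n1BracketCoord b m x y` is the `m`-th coordinate of `⁅x, y⁆` in `g^2_{(n,1)}`
(see `natCoord_lie`). -/
noncomputable def g2n1BracketCoord (b : Basis (Fin n) R L) (m : ℕ) : L →ₗ[R] L →ₗ[R] R :=
  LinearMap.mk₂ R (fun x y =>
    (if 3 ≤ m ∧ m ≤ n - 1 then
      natCoord b 1 x * natCoord b (m - 1) y - natCoord b (m - 1) x * natCoord b 1 y else 0) +
    (if 4 ≤ m ∧ m ≤ n - 1 then
      natCoord b (m - 2) x * natCoord b n y - natCoord b n x * natCoord b (m - 2) y else 0))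
    (by intros; split_ifs <;> simp only [map_add, add_zero] <;> ring)
    (by intros; split_ifs <;> simp only [map_smul, smul_eq_mul] <;> ring)
    (by intros; split_ifs <;> simp only [map_add, add_zero] <;> ring)
    (by intros; split_ifs <;> simp only [map_smul, smul_eq_mul] <;> ring)

@[simp]
theorem g2n1BracketCoord_apply (b : Basis (Fin n) R L) (m : ℕ) (x y : L) :
    g2n1BracketCoord b m x y =
      (if 3 ≤ m ∧ m ≤ n - 1 then
        natCoord b 1 x * natCoord b (m - 1) y - natCoord b (m - 1) x * natCoord b 1 y else 0) +
      (if 4 ≤ m ∧ m ≤ n - 1 then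
        natCoord b (m - 2) x * natCoord b n y - natCoord b n x * natCoord b (m - 2) y else 0) :=
  rfl

theorem natCoord_lie_e_of_lt {b : Basis (Fin n) R L} {e : ℕ → L}
    (hb : ∀ i : Fin n, e (i.1 + 1) = b i) (htab : IsG2n1Table n e)
    {p q : ℕ} (hp : 1 ≤ p) (hpq : p < q) (hqn : q ≤ n) (m : ℕ) :
    natCoord b m ⁅e p, e q⁆ =
      (if 3 ≤ m ∧ m ≤ n - 1 ∧ p = 1 ∧ q = m - 1 then 1 else 0) +
      (if 4 ≤ m ∧ m ≤ n - 1 ∧ p = m - 2 ∧ q = n then 1 else 0) := by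
  have hc := natCoord_e hb (R := R)
  rw [htab p q hp hpq hqn]
  by_cases h1 : p = 1 ∧ 2 ≤ q ∧ q ≤ n - 2
  · rw [if_pos h1, hc (by omega) (by omega)]
    split_ifs <;> first | omega | simp
  by_cases h2 : q = n ∧ 2 ≤ p ∧ p ≤ n - 3
  · rw [if_neg h1, if_pos h2, hc (by omega) (by omega)]
    split_ifs <;> first | omega | simp
  rw [if_neg h1, if_neg h2, map_zero]
  split_ifs <;> first | omega | simp

theorem natCoord_lie_e {b : Basis (Fin n) R L} {e : ℕ → L}
    (hb : ∀ i : Fin n, e (i.1 + 1) = b i) (htab : IsG2n1Table n e) {p q : ℕ}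
    (hp : 1 ≤ p) (hpn : p ≤ n) (hq : 1 ≤ q) (hqn : q ≤ n) (m : ℕ) :
    natCoord b m ⁅e p, e q⁆ = g2n1BracketCoord b m (e p) (e q) := by
  have hc := natCoord_e hb (R := R)
  simp only [g2n1BracketCoord_apply, hc hp hpn, hc hq hqn]
  rcases lt_trichotomy p q with h | rfl | h
  · rw [natCoord_lie_e_of_lt hb htab hp h hqn]
    simp (disch := omega) only [if_neg, mul_zero, zero_mul, sub_zero]
    split_ifs <;> first | omega | simp
  · rw [lie_self, map_zero]
    split_ifs <;> first | omega | simp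
  · rw [← lie_skew, map_neg, natCoord_lie_e_of_lt hb htab hq h hpn]
    simp (disch := omega) only [if_neg, mul_zero, zero_mul, zero_sub]
    split_ifs <;> first | omega | simp

theorem natCoord_lie {b : Basis (Fin n) R L} {e : ℕ → L}
    (hb : ∀ i : Fin n, e (i.1 + 1) = b i) (htab : IsG2n1Table n e) (m : ℕ) (x y : L) :
    natCoord b m ⁅x, y⁆ = g2n1BracketCoord b m x y := by
  let lhs : L →ₗ[R] L →ₗ[R] R := LinearMap.mk₂ R (fun x y => natCoord b m ⁅x, y⁆)
    (by simp [add_lie]) (by simp [smul_lie]) (by simp [lie_add]) (by simp [lie_smul])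
  have h := LinearMap.ext_basis (B := lhs) (B' := g2n1BracketCoord b m) b b fun i j => by
    rw [← hb, ← hb]
    exact natCoord_lie_e hb htab (by omega) (by omega) (by omega) (by omega) m
  exact LinearMap.congr_fun₂ h x y

end Table

section System

variable {K : Type*} [Field K] {n : ℕ} {a : ℕ → ℕ → K}

/-- The linear equations satisfied by the matrix `a m k` of a 1/2-derivation of `g^2_{(n,1)}`
(`a m k` being the coefficient of `e m` in `φ (e k)`): the `m`-th coordinates of the
1/2-derivation identity on `⁅e 1, e (k - 1)⁆ = e k` and on `⁅e (k - 2), e n⁆ = e k`. -/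
structure G2n1HalfDerivSystem (n : ℕ) (a : ℕ → ℕ → K) : Prop where
  lie_one : ∀ k m, 3 ≤ k → k ≤ n - 1 →
    2 * a m k = (if m = k then a 1 1 else 0) - (if m = k + 1 ∧ k ≤ n - 2 then a n 1 else 0) +
      (if 3 ≤ m ∧ m ≤ n - 1 then a (m - 1) (k - 1) else 0)
  lie_last : ∀ k m, 4 ≤ k → k ≤ n - 1 →
    2 * a m k = (if m = k then a n n else 0) - (if m + 1 = k then a 1 n else 0) +
      (if 4 ≤ m ∧ m ≤ n - 1 then a (m - 2) (k - 2) else 0)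

namespace G2n1HalfDerivSystem

theorem edge_eq_zero [NeZero (2 : K)] (h : G2n1HalfDerivSystem n a) {k m : ℕ} (hk : 3 ≤ k)
    (hkn : k ≤ n - 1) (hm : m < 3 ∨ n ≤ m) : a m k = 0 := by
  have e := h.lie_one k m hk hkn
  simp (disch := omega) only [if_neg, sub_zero, add_zero] at e
  exact mul_left_cancel₀ two_ne_zero (e.trans (mul_zero 2).symm)

theorem middle_eq_corners (h : G2n1HalfDerivSystem n a) {i j : ℕ} (hi : 2 ≤ i) (hin : i ≤ n - 3)
    (hj : 2 ≤ j) (hjn : j ≤ n - 3) :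
    a j i = (if j = i then 3 * a 1 1 - 2 * a n n else 0) - (if j = i + 1 then 3 * a n 1 else 0) +
      (if j + 1 = i then 2 * a 1 n else 0) := by
  have e₁ := h.lie_one (i + 2) (j + 2) (by omega) (by omega)
  have e₂ := h.lie_one (i + 1) (j + 1) (by omega) (by omega)
  have e₃ := h.lie_last (i + 2) (j + 2) (by omega) (by omega)
  simp only [Nat.add_sub_cancel, Nat.reduceSubDiff] at e₁ e₂ e₃
  by_cases hd : j = i <;> by_cases hs : j = i + 1 <;> by_cases hu : j + 1 = i <;>
    simp (disch := omega) only [if_pos, if_neg] at e₁ e₂ e₃ ⊢ <;>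
    first | omega | linear_combination 2 * e₁ + e₂ - 2 * e₃

theorem last_last_eq [NeZero (2 : K)] (h : G2n1HalfDerivSystem n a) (hn : 6 ≤ n) :
    a n n = a 1 1 := by
  have e := h.lie_one 3 3 le_rfl (by omega)
  have d₃ := h.middle_eq_corners (i := 3) (j := 3) (by omega) (by omega) (by omega) (by omega)
  have d₂ := h.middle_eq_corners (i := 2) (j := 2) le_rfl (by omega) le_rfl (by omega)
  simp (disch := omega) only [if_pos, if_neg, ↓reduceIte, Nat.reduceSub] at e d₂ d₃
  exact mul_left_cancel₀ two_ne_zero (by linear_combination -e + 2 * d₃ - d₂)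

theorem last_one_eq_zero [NeZero (2 : K)] (h : G2n1HalfDerivSystem n a) (hn : 7 ≤ n) :
    a n 1 = 0 := by
  have e := h.lie_one 3 4 le_rfl (by omega)
  have d₄₃ := h.middle_eq_corners (i := 3) (j := 4) (by omega) (by omega) (by omega) (by omega)
  have d₃₂ := h.middle_eq_corners (i := 2) (j := 3) le_rfl (by omega) (by omega) (by omega)
  simp (disch := omega) only [if_pos, if_neg, ↓reduceIte, true_and, Nat.reduceSub] at e d₄₃ d₃₂
  exact mul_left_cancel₀ two_ne_zero (by linear_combination -e + 2 * d₄₃ - d₃₂)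

theorem one_last_eq_zero [NeZero (2 : K)] (h : G2n1HalfDerivSystem n a) (hn : 7 ≤ n) :
    a 1 n = 0 := by
  have e := h.lie_one 4 3 (by omega) (by omega)
  have d₃₄ := h.middle_eq_corners (i := 4) (j := 3) (by omega) (by omega) (by omega) (by omega)
  have d₂₃ := h.middle_eq_corners (i := 3) (j := 2) (by omega) (by omega) le_rfl (by omega)
  simp (disch := omega) only [if_pos, if_neg, ↓reduceIte, Nat.reduceSub] at e d₃₄ d₂₃
  exact mul_left_cancel₀ two_ne_zero (by linear_combination e - 2 * d₃₄ + d₂₃)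

theorem middle_eq [NeZero (2 : K)] (h : G2n1HalfDerivSystem n a) (hn : 7 ≤ n)
    {i j : ℕ} (hi : 2 ≤ i) (hin : i ≤ n - 3) (hj : 2 ≤ j) (hjn : j ≤ n - 3) :
    a j i = if j = i then a 1 1 else 0 := by
  rw [h.middle_eq_corners hi hin hj hjn, h.last_last_eq (by omega), h.last_one_eq_zero hn,
    h.one_last_eq_zero hn]
  split_ifs <;> ring

theorem apply_eq_ite [NeZero (2 : K)] (h : G2n1HalfDerivSystem n a) (hn : 7 ≤ n) {k : ℕ}
    (hk : 4 ≤ k) (hkn : k ≤ n - 1) (m : ℕ) : a m k = if m = k then a 1 1 else 0 := by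
  rcases (show m < 3 ∨ n ≤ m ∨ m = 3 ∨ (4 ≤ m ∧ m ≤ n - 1) by omega)
    with hm | hm | rfl | ⟨hm, hmn⟩
  · rw [h.edge_eq_zero (by omega) hkn (.inl hm), if_neg (by omega)]
  · rw [h.edge_eq_zero (by omega) hkn (.inr hm), if_neg (by omega)]
  · have e := h.lie_one k 3 (by omega) hkn
    rw [h.edge_eq_zero (m := 2) (by omega) (by omega) (.inl (by omega))] at e
    simp (disch := omega) only [if_pos, if_neg, sub_zero, add_zero] at e ⊢
    exact mul_left_cancel₀ two_ne_zero (e.trans (mul_zero 2).symm)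
  · have e := h.lie_last k m hk hkn
    rw [h.middle_eq (i := k - 2) (j := m - 2) hn (by omega) (by omega) (by omega)
      (by omega), h.last_last_eq (by omega), h.one_last_eq_zero hn] at e
    refine mul_left_cancel₀ (two_ne_zero (α := K)) (e.trans ?_)
    split_ifs <;> first | omega | ring

end G2n1HalfDerivSystem

end System

section HalfDerivation

variable {K L : Type*} [Field K] [NeZero (2 : K)] [LieRing L] [LieAlgebra K L]

theorem two_smul_map_lie {φ : L →ₗ[K] L}
    (hφ : ∀ x y : L, φ ⁅x, y⁆ = (2 : K)⁻¹ • (⁅φ x, y⁆ + ⁅x, φ y⁆)) (x y : L) :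
    (2 : K) • φ ⁅x, y⁆ = ⁅φ x, y⁆ + ⁅x, φ y⁆ := by
  rw [hφ, smul_inv_smul₀ two_ne_zero]

variable {n : ℕ} {e : ℕ → L} {b : Basis (Fin n) K L} {φ : L →ₗ[K] L}

theorem two_mul_natCoord_map_lie (hb : ∀ i : Fin n, e (i.1 + 1) = b i)
    (htab : IsG2n1Table n e) (hφ : ∀ x y : L, φ ⁅x, y⁆ = (2 : K)⁻¹ • (⁅φ x, y⁆ + ⁅x, φ y⁆))
    (m : ℕ) (x y : L) :
    2 * natCoord b m (φ ⁅x, y⁆) =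
      g2n1BracketCoord b m (φ x) y + g2n1BracketCoord b m x (φ y) := by
  rw [← natCoord_lie hb htab, ← natCoord_lie hb htab, ← map_add, ← two_smul_map_lie hφ, map_smul,
    smul_eq_mul]

theorem g2n1HalfDerivSystem_natCoord (hb : ∀ i : Fin n, e (i.1 + 1) = b i)
    (htab : IsG2n1Table n e) (hφ : ∀ x y : L, φ ⁅x, y⁆ = (2 : K)⁻¹ • (⁅φ x, y⁆ + ⁅x, φ y⁆)) :
    G2n1HalfDerivSystem n fun m k => natCoord b m (φ (e k)) where
  lie_one k m hk hkn := by
    have hbr : ⁅e 1, e (k - 1)⁆ = e k := by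
      rw [htab 1 (k - 1) le_rfl (by omega) (by omega), if_pos (by omega)]
      congr 1
      omega
    simp only [← hbr, two_mul_natCoord_map_lie hb htab hφ, g2n1BracketCoord_apply,
      natCoord_e hb (k := 1) le_rfl (by omega),
      natCoord_e hb (k := k - 1) (by omega) (by omega)]
    simp (disch := omega) only [if_neg, mul_zero, zero_mul, sub_zero]
    split_ifs <;> first | omega | ring
  lie_last k m hk hkn := by
    have hbr : ⁅e (k - 2), e n⁆ = e k := by
      rw [htab (k - 2) n (by omega) (by omega) le_rfl, if_neg (by omega), if_pos (by omega)]
      congr 1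
      omega
    simp only [← hbr, two_mul_natCoord_map_lie hb htab hφ, g2n1BracketCoord_apply,
      natCoord_e hb (k := n) (by omega) le_rfl,
      natCoord_e hb (k := k - 2) (by omega) (by omega)]
    simp (disch := omega) only [if_neg, mul_zero, zero_mul, sub_zero]
    split_ifs <;> first | omega | ring

theorem natCoord_one_map_e_two (hb : ∀ i : Fin n, e (i.1 + 1) = b i) (htab : IsG2n1Table n e)
    (hφ : ∀ x y : L, φ ⁅x, y⁆ = (2 : K)⁻¹ • (⁅φ x, y⁆ + ⁅x, φ y⁆)) (hn : 6 ≤ n) :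
    natCoord b 1 (φ (e 2)) = 0 := by
  have hbr : ⁅e 2, e (n - 2)⁆ = 0 := by
    rw [htab 2 (n - 2) (by omega) (by omega) (by omega), if_neg (by omega), if_neg (by omega)]
  have h := two_mul_natCoord_map_lie hb htab hφ (n - 1) (e 2) (e (n - 2))
  simp only [hbr, map_zero, mul_zero, g2n1BracketCoord_apply,
    natCoord_e hb (k := 2) (by omega) (by omega),
    natCoord_e hb (k := n - 2) (by omega) (by omega)] at h
  simp (disch := omega) only [if_pos, if_neg, mul_zero, mul_one, zero_mul, sub_zero, add_zero]
    at h
  exact h.symm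

end HalfDerivation

/-- For n ≥ 7, any 1/2-derivation of g^2_{(n,1)} satisfies φ(e_i) = α₁ e_i for
4 ≤ i ≤ n−1, where α₁ is the coefficient of e_1 in φ(e_1); moreover the
coefficient of e_1 in φ(e_2) and in φ(e_n) is zero. -/
theorem g2n1_half_derivation_middle
    (n : ℕ) (hn : 7 ≤ n)
    (L : Type*) [LieRing L] [LieAlgebra ℂ L]
    (e : ℕ → L) (b : Module.Basis (Fin n) ℂ L)
    (hb : ∀ i : Fin n, e (i.1 + 1) = b i)
    (htab : ∀ i j : ℕ, 1 ≤ i → i < j → j ≤ n →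
      ⁅e i, e j⁆ =
        if i = 1 ∧ 2 ≤ j ∧ j ≤ n - 2 then e (j + 1)
        else if j = n ∧ 2 ≤ i ∧ i ≤ n - 3 then e (i + 2)
        else 0)
    (φ : L →ₗ[ℂ] L)
    (hφ : ∀ x y : L, φ ⁅x, y⁆ = (2 : ℂ)⁻¹ • (⁅φ x, y⁆ + ⁅x, φ y⁆)) :
    (∀ i : ℕ, 4 ≤ i → i ≤ n - 1 →
      φ (e i) = (b.repr (φ (e 1)) ⟨0, by omega⟩) • e i) ∧
    b.repr (φ (e 2)) ⟨0, by omega⟩ = 0 ∧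
    b.repr (φ (e n)) ⟨0, by omega⟩ = 0 := by
  have hsys := g2n1HalfDerivSystem_natCoord hb htab hφ
  have hrepr : ∀ x, b.repr x ⟨0, by omega⟩ = natCoord b 1 x := fun x =>
    (natCoord_succ_apply b ⟨0, by omega⟩ x).symm
  simp only [hrepr]
  refine ⟨fun k hk hkn => ext_natCoord b fun m => ?_, natCoord_one_map_e_two hb htab hφ (by omega),
    hsys.one_last_eq_zero hn⟩
  rw [map_smul, natCoord_e hb (by omega) (by omega), smul_eq_mul, mul_ite, mul_one, mul_zero]
  exact hsys.apply_eq_ite hn hk hkn m
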